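/- Let Δ > 1 and L ≥ 2 an integer. The XXZ Hamiltonian H^XXZ_{[1,L]} on H_L = (ℂ²)^{⊗L} is positive semidefinite, its kernel equals span{|↑⋯↑⟩, |↓⋯↓⟩} exactly, and as quadratic forms H^XXZ_{[1,L]} ≥ (1/2)(1 − Δ⁻¹)(1 − P₀), where P₀ is the orthogonal projection onto span{|↑⋯↑⟩, |↓⋯↓⟩}. -/

import Mathlib

open scoped Classical

noncomputable section

/-- Spin configurations of the chain of length `L`; `true` means down spin. -/
abbrev SpinConf (L : ℕ) := Fin L → Bool

/-- The Hilbert space `(ℂ²)^{⊗L}` in the configuration basis. -/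
abbrev ChainSpace (L : ℕ) := EuclideanSpace ℂ (SpinConf L)

/-- The set of down-spin sites of a configuration. -/
def downs {L : ℕ} (σ : SpinConf L) : Finset (Fin L) := Finset.univ.filter fun i => σ i = true

/-- Exchange the spins at sites `i` and `j`. -/
def swapPair {L : ℕ} (i j : Fin L) (σ : SpinConf L) : SpinConf L :=
  fun k => if k = i then σ j else if k = j then σ i else σ k

/-- The matrix of the nearest-neighbour interaction
`H^XXZ_{i,j} = −Δ⁻¹(S⃗_i·S⃗_j − 1/4) − (1−Δ⁻¹)(S³_iS³_j − 1/4)` in the configuration basis: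
it annihilates configurations with equal spins at `i,j`, and on a configuration with
opposite spins it acts by `(1/2)·id − (1/(2Δ))·(spin exchange)`. -/
def bondMat (Δ : ℝ) {L : ℕ} (i j : Fin L) : Matrix (SpinConf L) (SpinConf L) ℂ :=
  fun σ τ =>
    if σ i = σ j then 0
    else (if τ = σ then (1/2 : ℂ) else 0) -
      ((1/(2*Δ) : ℝ) : ℂ) * (if τ = swapPair i j σ then 1 else 0)

/-- `H^XXZ_{[1,L]} = Σ_{x=1}^{L−1} H^XXZ_{x,x+1}` (sites are `1,…,L`, i.e. `i+1` for `i : Fin L`). -/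
def xxzMat (Δ : ℝ) (L : ℕ) : Matrix (SpinConf L) (SpinConf L) ℂ :=
  ∑ x : Fin L, if h : (x : ℕ) + 1 < L then bondMat Δ x ⟨(x : ℕ) + 1, h⟩ else 0

/-- Third spin component at site `i`: diagonal with value `±1/2`. -/
def s3Mat {L : ℕ} (i : Fin L) : Matrix (SpinConf L) (SpinConf L) ℂ :=
  fun σ τ => if τ = σ then (if σ i then (-(1/2) : ℂ) else (1/2 : ℂ)) else 0

/-- `A(Δ) = (1/2)√(1 − Δ⁻²)`. -/
def aDelta (Δ : ℝ) : ℝ := Real.sqrt (1 - Δ⁻¹ ^ 2) / 2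

/-- The droplet Hamiltonian `H^{++}_{[1,L]} = H^XXZ_{[1,L]} − A(Δ)(S³_1 + S³_L)`. -/
def hppMat (Δ : ℝ) (L : ℕ) (hL : 0 < L) : Matrix (SpinConf L) (SpinConf L) ℂ :=
  xxzMat Δ L - ((aDelta Δ : ℝ) : ℂ) •
    (s3Mat (⟨0, hL⟩ : Fin L) + s3Mat (⟨L - 1, by omega⟩ : Fin L))

/-- The all-up product vector `|↑⋯↑⟩`. -/
def allUpVec (L : ℕ) : ChainSpace L := EuclideanSpace.single (fun _ => false) 1

/-- The all-down product vector `|↓⋯↓⟩`. -/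
def allDownVec (L : ℕ) : ChainSpace L := EuclideanSpace.single (fun _ => true) 1

/-- continuous linear map associated to a matrix. -/
def matCLM {L : ℕ} (M : Matrix (SpinConf L) (SpinConf L) ℂ) :
    ChainSpace L →L[ℂ] ChainSpace L :=
  LinearMap.toContinuousLinearMap (Matrix.toEuclideanLin M)

/-- The orthogonal projection onto a subspace, as an operator on the whole space. -/
def projCLM {L : ℕ} (K : Submodule ℂ (ChainSpace L)) : ChainSpace L →L[ℂ] ChainSpace L :=
  K.subtypeL.comp K.orthogonalProjection

/-- The kink ⊗ antikink droplet state `ξ_{L,n}(x) = ψ^{+−}_{[1,x]}(⌊n/2⌋) ⊗ ψ^{−+}_{[x+1,L]}(⌈n/2⌉)`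
written in the configuration basis (site `i : Fin L` has position `i+1`). -/
def dropletVec (q : ℝ) (L n x : ℕ) : ChainSpace L :=
  WithLp.toLp 2 fun σ : SpinConf L =>
    if ((downs σ).filter fun i => (i : ℕ) + 1 ≤ x).card = n / 2 ∧
       ((downs σ).filter fun i => x < (i : ℕ) + 1).card = n - n / 2 then
      (q : ℂ) ^ ((∑ i ∈ (downs σ).filter fun i => (i : ℕ) + 1 ≤ x, ((x : ℤ) - (i : ℕ))) +
        ∑ i ∈ (downs σ).filter fun i => x < (i : ℕ) + 1, (((i : ℕ) : ℤ) + 1 - (x : ℤ)))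
    else 0

/-- The droplet subspace `K_{L,n} = span{ξ_{L,n}(x) : ⌊n/2⌋ ≤ x ≤ L − ⌈n/2⌉}`. -/
def dropletSpace (q : ℝ) (L n : ℕ) : Submodule ℂ (ChainSpace L) :=
  Submodule.span ℂ {v | ∃ x : ℕ, n / 2 ≤ x ∧ x ≤ L - (n - n / 2) ∧ v = dropletVec q L n x}

/-- `P_J` for the interval `J` of positions `[a, a+l−1]`: projection onto configurations that
are fully polarized (all up or all down) on `J`. -/
def pJ (L a l : ℕ) (ψ : ChainSpace L) : ChainSpace L :=
  WithLp.toLp 2 fun σ : SpinConf L =>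
    if (∀ i : Fin L, a ≤ (i : ℕ) + 1 → (i : ℕ) + 1 ≤ a + l - 1 → σ i = false) ∨
       (∀ i : Fin L, a ≤ (i : ℕ) + 1 → (i : ℕ) + 1 ≤ a + l - 1 → σ i = true) then ψ σ else 0

end

/-- The span of the all-up and all-down product vectors. -/
noncomputable def upDownSpan (L : ℕ) : Submodule ℂ (ChainSpace L) :=
  Submodule.span ℂ {allUpVec L, allDownVec L}

/-!
On a configuration `σ` with opposite spins at `i, j` the bond `H_{ij}` acts as
`½ − (2Δ)⁻¹ · swap`, and the swap is an involution of the set of such configurations, so AM–GM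
bounds the exchange part of `⟨ψ, H_{ij} ψ⟩` by `(2Δ)⁻¹` times the weight of `ψ` on that set.
Every configuration other than the two constant ones has a domain wall somewhere, so summing over
the bonds gives `⟨ψ, H ψ⟩ ≥ ½(1 − Δ⁻¹) ∑_{σ non-constant} |ψ σ|² = ½(1 − Δ⁻¹)(‖ψ‖² − ‖P₀ψ‖²)`.
For `Δ > 1` this forces the kernel into the span of the constant configurations, each of which
every bond annihilates.
-/

open Finset ComplexConjugate

lemma Complex.re_conj_mul_le (a b : ℂ) : (conj a * b).re ≤ (‖a‖ ^ 2 + ‖b‖ ^ 2) / 2 := by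
  have h : (conj a * b).re ≤ ‖a‖ * ‖b‖ := by
    simpa only [norm_mul, Complex.norm_conj] using Complex.re_le_norm (conj a * b)
  nlinarith [sq_nonneg (‖a‖ - ‖b‖)]

lemma Finset.sum_re_conj_mul_comp_le {ι : Type*} {s : Finset ι} {f : ι → ι}
    (hf : Function.Involutive f) (hs : ∀ x ∈ s, f x ∈ s) (ψ : ι → ℂ) :
    ∑ x ∈ s, (conj (ψ x) * ψ (f x)).re ≤ ∑ x ∈ s, ‖ψ x‖ ^ 2 := by
  have hperm : ∑ x ∈ s, ‖ψ (f x)‖ ^ 2 = ∑ x ∈ s, ‖ψ x‖ ^ 2 :=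
    sum_nbij' f f hs hs (fun x _ => hf x) (fun x _ => hf x) fun _ _ => rfl
  calc ∑ x ∈ s, (conj (ψ x) * ψ (f x)).re
      ≤ ∑ x ∈ s, (‖ψ x‖ ^ 2 + ‖ψ (f x)‖ ^ 2) / 2 :=
        sum_le_sum fun x _ => Complex.re_conj_mul_le _ _
    _ = ∑ x ∈ s, ‖ψ x‖ ^ 2 := by rw [← sum_div, sum_add_distrib, hperm]; ring

namespace EuclideanSpace

variable {𝕜 ι : Type*} [RCLike 𝕜] [Fintype ι] [DecidableEq ι] (s : Finset ι)

lemma starProjection_span_single_image (x : EuclideanSpace 𝕜 ι) :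
    (Submodule.span 𝕜 ((fun i => single i (1 : 𝕜)) '' s)).starProjection x =
      WithLp.toLp 2 fun i => if i ∈ s then x i else 0 := by
  set K := Submodule.span 𝕜 ((fun i => single i (1 : 𝕜)) '' (s : Set ι))
  set v : EuclideanSpace 𝕜 ι := WithLp.toLp 2 fun i => if i ∈ s then x i else 0
  refine Submodule.eq_starProjection_of_mem_of_inner_eq_zero ?_ fun w hw => ?_
  · have hv : v = ∑ i ∈ s, x i • single i (1 : 𝕜) := by
      ext j
      simp [v, Pi.single_apply]
    rw [hv]
    exact Submodule.sum_mem _ fun i hi =>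
      Submodule.smul_mem _ _ (Submodule.subset_span ⟨i, hi, rfl⟩)
  · have hle : K ≤ LinearMap.ker (innerₛₗ 𝕜 (x - v)) := by
      rw [Submodule.span_le]
      rintro _ ⟨i, hi, rfl⟩
      simp [v, inner_single_right, mem_coe.mp hi]
    exact hle hw

lemma mem_span_single_image_iff {x : EuclideanSpace 𝕜 ι} :
    x ∈ Submodule.span 𝕜 ((fun i => single i (1 : 𝕜)) '' s) ↔ ∀ i ∉ s, x i = 0 := by
  rw [← Submodule.starProjection_eq_self_iff, starProjection_span_single_image, WithLp.ext_iff,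
    funext_iff]
  refine forall_congr' fun i => ?_
  by_cases hi : i ∈ s <;> simp [hi, eq_comm]

lemma norm_sq_sub_norm_sq_starProjection_span_single_image (x : EuclideanSpace 𝕜 ι) :
    ‖x‖ ^ 2 - ‖(Submodule.span 𝕜 ((fun i => single i (1 : 𝕜)) '' s)).starProjection x‖ ^ 2 =
      ∑ i ∈ sᶜ, ‖x i‖ ^ 2 := by
  rw [starProjection_span_single_image, norm_sq_eq, norm_sq_eq, ← sum_compl_add_sum s,
    ← sum_compl_add_sum s (fun i => ‖_‖ ^ 2)]
  have hout : ∑ i ∈ sᶜ, ‖(if i ∈ s then x i else 0)‖ ^ 2 = 0 :=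
    sum_eq_zero fun i hi => by simp [mem_compl.mp hi]
  have hin : ∑ i ∈ s, ‖(if i ∈ s then x i else 0)‖ ^ 2 = ∑ i ∈ s, ‖x i‖ ^ 2 :=
    sum_congr rfl fun i hi => by simp [hi]
  rw [hout, hin]
  ring

end EuclideanSpace

open Matrix in
lemma Matrix.inner_toEuclideanLin_eq_sum {𝕜 n : Type*} [RCLike 𝕜] [Fintype n] [DecidableEq n]
    (M : Matrix n n 𝕜) (x y : EuclideanSpace 𝕜 n) :
    inner 𝕜 x (M.toEuclideanLin y) = ∑ k, conj (x k) * (M *ᵥ y) k := by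
  simp [PiLp.inner_apply, mul_comm]

section SwapPair

variable {L : ℕ} (i j : Fin L) (σ : SpinConf L)

@[simp]
lemma swapPair_apply_left : swapPair i j σ i = σ j := by
  simp [swapPair]

@[simp]
lemma swapPair_apply_right : swapPair i j σ j = σ i := by
  by_cases h : j = i <;> simp [swapPair, h]

lemma swapPair_involutive : Function.Involutive (swapPair i j) := by
  intro σ
  funext k
  by_cases hki : k = i <;> by_cases hkj : k = j <;> simp_all [swapPair]

lemma swapPair_apply_left_eq_apply_right_iff :
    swapPair i j σ i = swapPair i j σ j ↔ σ i = σ j := by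
  rw [swapPair_apply_left, swapPair_apply_right, eq_comm]

end SwapPair

section Bond

open Matrix

variable (Δ : ℝ) {L : ℕ} (i j : Fin L)

lemma bondMat_mulVec_apply (ψ : SpinConf L → ℂ) (σ : SpinConf L) :
    (bondMat Δ i j *ᵥ ψ) σ =
      if σ i = σ j then 0
      else 1 / 2 * ψ σ - ((1 / (2 * Δ) : ℝ) : ℂ) * ψ (swapPair i j σ) := by
  split_ifs with h <;> simp [mulVec, dotProduct, bondMat, h, sub_mul, sum_sub_distrib, ite_mul]

lemma bondMat_isHermitian : (bondMat Δ i j).IsHermitian := by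
  ext σ τ
  have hreal : star (bondMat Δ i j τ σ) = bondMat Δ i j τ σ := by
    unfold bondMat
    split_ifs <;> simp [Complex.conj_ofReal]
  rw [conjTranspose_apply, hreal]
  rcases eq_or_ne τ σ with rfl | hτσ
  · rfl
  rcases eq_or_ne τ (swapPair i j σ) with rfl | hτ
  · simp [bondMat, swapPair_involutive i j σ, hτσ, hτσ.symm, @eq_comm _ (σ j)]
  have hστ : σ ≠ swapPair i j τ := fun h => hτ (by rw [h, swapPair_involutive])
  simp [bondMat, hτσ, hτσ.symm, hτ, hστ]

lemma bondMat_mulVec_eq_zero {ψ : SpinConf L → ℂ}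
    (hψ : ∀ σ, σ i ≠ σ j → ψ σ = 0) : bondMat Δ i j *ᵥ ψ = 0 := by
  funext σ
  rw [bondMat_mulVec_apply]
  split_ifs with h
  · rfl
  · rw [hψ σ h, hψ _ (by rwa [ne_eq, swapPair_apply_left_eq_apply_right_iff])]
    simp

variable {Δ} in
lemma re_inner_bondMat_ge (hΔ : 0 ≤ Δ) (ψ : ChainSpace L) :
    1 / 2 * (1 - Δ⁻¹) * ∑ σ with σ i ≠ σ j, ‖ψ σ‖ ^ 2 ≤
      (inner ℂ ψ ((bondMat Δ i j).toEuclideanLin ψ)).re := by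
  set D := univ.filter fun σ : SpinConf L => σ i ≠ σ j
  have hD : ∀ σ ∈ D, swapPair i j σ ∈ D := by
    simp only [D, mem_filter, mem_univ, true_and, ne_eq, swapPair_apply_left_eq_apply_right_iff]
    exact fun _ h => h
  have hform : (inner ℂ ψ ((bondMat Δ i j).toEuclideanLin ψ)).re =
      ∑ σ ∈ D, (1 / 2 * ‖ψ σ‖ ^ 2 - 1 / (2 * Δ) * (conj (ψ σ) * ψ (swapPair i j σ)).re) := by
    rw [inner_toEuclideanLin_eq_sum, Complex.re_sum, sum_filter]
    refine sum_congr rfl fun σ _ => ?_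
    rw [bondMat_mulVec_apply]
    by_cases h : σ i = σ j
    · simp [h]
    have e : conj (ψ σ) * (1 / 2 * ψ σ - ((1 / (2 * Δ) : ℝ) : ℂ) * ψ (swapPair i j σ)) =
        ((1 / 2 : ℝ) : ℂ) * (conj (ψ σ) * ψ σ) -
          ((1 / (2 * Δ) : ℝ) : ℂ) * (conj (ψ σ) * ψ (swapPair i j σ)) := by
      push_cast
      ring
    rw [if_pos h, if_neg h, e, Complex.sub_re, Complex.re_ofReal_mul, Complex.re_ofReal_mul,
      Complex.conj_mul', ← Complex.ofReal_pow, Complex.ofReal_re]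
  have hcross := sum_re_conj_mul_comp_le (swapPair_involutive i j) hD ψ
  have hc : 0 ≤ 1 / (2 * Δ) := by positivity
  rw [hform, sum_sub_distrib, ← mul_sum, ← mul_sum]
  have hcoef : 1 / 2 * (1 - Δ⁻¹) = 1 / 2 - 1 / (2 * Δ) := by ring
  rw [hcoef]
  linarith [mul_le_mul_of_nonneg_left hcross hc]

end Bond

section DomainWalls

variable {L : ℕ}

def HasDomainWallAt (σ : SpinConf L) (x : Fin L) : Prop :=
  ∃ h : (x : ℕ) + 1 < L, σ x ≠ σ ⟨x + 1, h⟩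

variable (L) in
def constConfs : Finset (SpinConf L) := {fun _ => false, fun _ => true}

lemma apply_eq_apply_of_mem_constConfs {σ : SpinConf L} (hσ : σ ∈ constConfs L) (i j : Fin L) :
    σ i = σ j := by
  simp only [constConfs, mem_insert, mem_singleton] at hσ
  rcases hσ with rfl | rfl <;> rfl

lemma exists_hasDomainWallAt {σ : SpinConf L} (hσ : σ ∉ constConfs L) :
    ∃ x, HasDomainWallAt σ x := by
  by_contra! hflat
  simp only [HasDomainWallAt, not_exists, not_not] at hflat
  apply hσ
  cases L with
  | zero => simp [constConfs, Subsingleton.elim σ (fun _ => false)]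
  | succ n =>
    have hconst : ∀ k, σ k = σ 0 :=
      Fin.induction rfl fun k ih => (hflat k.castSucc k.succ.isLt).symm.trans ih
    cases h0 : σ 0 <;> simp [constConfs, funext_iff, hconst, h0]

lemma sum_compl_constConfs_le_sum_domainWalls (f : SpinConf L → ℝ) (hf : 0 ≤ f) :
    ∑ σ ∈ (constConfs L)ᶜ, f σ ≤ ∑ x : Fin L, ∑ σ with HasDomainWallAt σ x, f σ := by
  have hterm : ∀ σ x, 0 ≤ if HasDomainWallAt σ x then f σ else 0 := fun σ x =>
    by split_ifs; exacts [hf σ, le_rfl]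
  simp_rw [sum_filter]
  rw [sum_comm]
  calc ∑ σ ∈ (constConfs L)ᶜ, f σ
      ≤ ∑ σ ∈ (constConfs L)ᶜ, ∑ x, if HasDomainWallAt σ x then f σ else 0 :=
        sum_le_sum fun σ hσ => by
          obtain ⟨x, hx⟩ := exists_hasDomainWallAt (mem_compl.mp hσ)
          calc f σ = if HasDomainWallAt σ x then f σ else 0 := (if_pos hx).symm
            _ ≤ _ := single_le_sum (fun y _ => hterm σ y) (mem_univ x)
    _ ≤ ∑ σ, ∑ x, if HasDomainWallAt σ x then f σ else 0 :=
        sum_le_sum_of_subset_of_nonneg (subset_univ _) fun σ _ _ =>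
          sum_nonneg fun x _ => hterm σ x

variable (L) in
lemma upDownSpan_eq_span_single :
    upDownSpan L =
      Submodule.span ℂ ((fun σ => EuclideanSpace.single σ (1 : ℂ)) '' constConfs L) := by
  rw [upDownSpan, constConfs, coe_pair, Set.image_pair]
  rfl

end DomainWalls

section Chain

open Matrix
open scoped ComplexOrder

variable {Δ : ℝ} {L : ℕ}

variable (Δ L) in
lemma xxzMat_isHermitian : (xxzMat Δ L).IsHermitian := by
  refine isHermitian_iff_isSelfAdjoint.mpr (isSelfAdjoint_sum _ fun x _ => ?_)
  split_ifs
  · exact bondMat_isHermitian Δ _ _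
  · exact isHermitian_zero

variable (Δ) in
lemma xxzMat_mulVec_eq_zero {ψ : SpinConf L → ℂ} (hψ : ∀ σ ∉ constConfs L, ψ σ = 0) :
    xxzMat Δ L *ᵥ ψ = 0 := by
  rw [xxzMat, sum_mulVec]
  refine sum_eq_zero fun x _ => ?_
  split_ifs with h
  · exact bondMat_mulVec_eq_zero _ _ _ fun σ hσ =>
      hψ σ fun hc => hσ (apply_eq_apply_of_mem_constConfs hc _ _)
  · exact zero_mulVec ψ

lemma re_inner_xxzMat_ge (hΔ : 1 ≤ Δ) (ψ : ChainSpace L) :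
    1 / 2 * (1 - Δ⁻¹) * ∑ σ ∈ (constConfs L)ᶜ, ‖ψ σ‖ ^ 2 ≤
      (inner ℂ ψ ((xxzMat Δ L).toEuclideanLin ψ)).re := by
  have hc : 0 ≤ 1 / 2 * (1 - Δ⁻¹) := by
    have := inv_le_one_of_one_le₀ hΔ
    linarith
  calc 1 / 2 * (1 - Δ⁻¹) * ∑ σ ∈ (constConfs L)ᶜ, ‖ψ σ‖ ^ 2
      ≤ 1 / 2 * (1 - Δ⁻¹) * ∑ x : Fin L, ∑ σ with HasDomainWallAt σ x, ‖ψ σ‖ ^ 2 :=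
        mul_le_mul_of_nonneg_left
          (sum_compl_constConfs_le_sum_domainWalls _ fun σ => by positivity) hc
    _ = ∑ x : Fin L, 1 / 2 * (1 - Δ⁻¹) * ∑ σ with HasDomainWallAt σ x, ‖ψ σ‖ ^ 2 := mul_sum _ _ _
    _ ≤ ∑ x : Fin L, (inner ℂ ψ ((if h : (x : ℕ) + 1 < L then bondMat Δ x ⟨x + 1, h⟩
          else 0).toEuclideanLin ψ)).re := sum_le_sum fun x _ => by
        by_cases h : (x : ℕ) + 1 < L
        · have hwall : ∀ σ : SpinConf L, HasDomainWallAt σ x ↔ σ x ≠ σ ⟨x + 1, h⟩ :=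
            fun σ => ⟨fun ⟨_, hne⟩ => hne, fun hne => ⟨h, hne⟩⟩
          simp only [dif_pos h, hwall]
          exact re_inner_bondMat_ge _ _ (by linarith) ψ
        · simp [HasDomainWallAt, h]
    _ = (inner ℂ ψ ((xxzMat Δ L).toEuclideanLin ψ)).re := by
        rw [xxzMat, map_sum, LinearMap.sum_apply, inner_sum, Complex.re_sum]

lemma xxzMat_posSemidef (hΔ : 1 ≤ Δ) : (xxzMat Δ L).PosSemidef := by
  have hc : 0 ≤ 1 / 2 * (1 - Δ⁻¹) := by
    have := inv_le_one_of_one_le₀ hΔ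
    linarith
  rw [← isPositive_toEuclideanLin_iff]
  refine ⟨isSymmetric_toEuclideanLin_iff.mpr (xxzMat_isHermitian Δ L), fun ψ => ?_⟩
  rw [inner_re_symm]
  exact (mul_nonneg hc (sum_nonneg fun σ _ => by positivity)).trans (re_inner_xxzMat_ge hΔ ψ)

lemma ker_toEuclideanLin_xxzMat (hΔ : 1 < Δ) :
    LinearMap.ker (xxzMat Δ L).toEuclideanLin =
      Submodule.span ℂ ((fun σ => EuclideanSpace.single σ (1 : ℂ)) '' constConfs L) := by
  ext ψ
  rw [LinearMap.mem_ker, EuclideanSpace.mem_span_single_image_iff]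
  refine ⟨fun hψ σ hσ => ?_, fun hψ => ?_⟩
  · have hc : 0 < 1 / 2 * (1 - Δ⁻¹) := by
      have := inv_lt_one_of_one_lt₀ hΔ
      linarith
    have hform := re_inner_xxzMat_ge hΔ.le ψ
    rw [hψ, inner_zero_right, Complex.zero_re] at hform
    have hzero : ∑ σ ∈ (constConfs L)ᶜ, ‖ψ σ‖ ^ 2 = 0 :=
      le_antisymm (nonpos_of_mul_nonpos_right hform hc) (sum_nonneg fun σ _ => by positivity)
    rw [sum_eq_zero_iff_of_nonneg fun σ _ => by positivity] at hzero
    simpa using hzero σ (mem_compl.mpr hσ)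
  · rw [toLpLin_apply, xxzMat_mulVec_eq_zero Δ hψ]
    rfl

end Chain

open scoped ComplexOrder in
theorem stmt10_general (Δ : ℝ) (hΔ : 1 < Δ) (L : ℕ) :
    (xxzMat Δ L).PosSemidef ∧
    LinearMap.ker (Matrix.toEuclideanLin (xxzMat Δ L)) = upDownSpan L ∧
    ∀ ψ : ChainSpace L,
      (1/2) * (1 - Δ⁻¹) *
          (‖ψ‖ ^ 2 - ‖(upDownSpan L).orthogonalProjection ψ‖ ^ 2)
        ≤ (inner ℂ ψ (Matrix.toEuclideanLin (xxzMat Δ L) ψ) : ℂ).re := by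
  rw [upDownSpan_eq_span_single]
  refine ⟨xxzMat_posSemidef hΔ.le, ker_toEuclideanLin_xxzMat hΔ, fun ψ => ?_⟩
  rw [Submodule.coe_norm, Submodule.coe_orthogonalProjectionOnto_apply,
    EuclideanSpace.norm_sq_sub_norm_sq_starProjection_span_single_image]
  exact re_inner_xxzMat_ge hΔ.le ψ

open scoped ComplexOrder in
/-- `H^XXZ_{[1,L]}` is positive semidefinite, its kernel is exactly
`span{|↑⋯↑⟩, |↓⋯↓⟩}`, and as quadratic forms `H^XXZ ≥ (1/2)(1−Δ⁻¹)(1 − P₀)` where `P₀`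
is the orthogonal projection onto this span. -/
theorem stmt10 (Δ : ℝ) (hΔ : 1 < Δ) (L : ℕ) (hL : 2 ≤ L) :
    (xxzMat Δ L).PosSemidef ∧
    LinearMap.ker (Matrix.toEuclideanLin (xxzMat Δ L)) = upDownSpan L ∧
    ∀ ψ : ChainSpace L,
      (1/2) * (1 - Δ⁻¹) *
          (‖ψ‖ ^ 2 - ‖(upDownSpan L).orthogonalProjection ψ‖ ^ 2)
        ≤ (inner ℂ ψ (Matrix.toEuclideanLin (xxzMat Δ L) ψ) : ℂ).re :=
  stmt10_general Δ hΔ L
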